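/- arXiv:1910.05130 — 2 statements merged into one kernel-verified Lean document; each statement's English description precedes it below -/
import Mathlib

section
/- Let x(s) = s², x_ν(s) = (s+ν/2)², and the generalized power as above. Then the z-backward difference of the reciprocal satisfies: (1/[x_ν(s)−x_ν(z)]^{(μ)} − 1/[x_ν(s)−x_ν(z−1)]^{(μ)}) / (x_{ν−μ+1}(z) − x_{ν−μ+1}(z−1)) = μ / [x_ν(s) − x_ν(z)]^{(μ+1)}. -/
/-! All three generalized powers in the identity are rational multiples of `gp (ν - 1) s z μ`,
by `Γ(x + 1) = x Γ(x)`; after factoring it out, the identity reduces to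
`(b - μ)/b - a/(a + μ) = μ (b - a - μ) / (b (a + μ))` with `a = s - z`, `b = s + z + ν`,
and `b - a - μ = 2z + ν - μ` is exactly the lattice step `x_{ν-μ+1}(z) - x_{ν-μ+1}(z-1)`. -/

/-- Shifted quadratic lattice `x_γ(s) = (s + γ/2)²`. -/
noncomputable def xsh (γ s : ℝ) : ℝ := (s + γ / 2) ^ 2

/-- Generalized power `[x_ν(s) − x_ν(z)]^{(μ)}` on the quadratic lattice. -/
noncomputable def gp (ν s z μ : ℝ) : ℝ :=
  Real.Gamma (s - z + μ) * Real.Gamma (s + z + ν + 1) /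
    (Real.Gamma (s - z) * Real.Gamma (s + z + ν - μ + 1))

/-- `x` is not a nonpositive integer. -/
def NotPole (x : ℝ) : Prop := ∀ n : ℕ, x ≠ -(n : ℝ)

lemma xsh_sub_xsh_sub_one (γ z : ℝ) : xsh γ z - xsh γ (z - 1) = 2 * z + γ - 1 := by
  simp only [xsh]
  ring

lemma NotPole.ne_zero {x : ℝ} (h : NotPole x) : x ≠ 0 := by
  simpa using h 0

lemma NotPole.Gamma_ne_zero {x : ℝ} (h : NotPole x) : Real.Gamma x ≠ 0 :=
  Real.Gamma_ne_zero h

section Contiguous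

variable {ν s z μ : ℝ}

lemma gp_ne_zero (ha : NotPole (s - z)) (haμ : NotPole (s - z + μ))
    (hb : NotPole (s + z + ν + 1)) (hbμ : NotPole (s + z + ν - μ + 1)) : gp ν s z μ ≠ 0 :=
  div_ne_zero (mul_ne_zero haμ.Gamma_ne_zero hb.Gamma_ne_zero)
    (mul_ne_zero ha.Gamma_ne_zero hbμ.Gamma_ne_zero)

lemma gp_eq_gp_sub_one_left (hb : s + z + ν ≠ 0) (hbμ : s + z + ν - μ ≠ 0) :
    gp ν s z μ = gp (ν - 1) s z μ * (s + z + ν) / (s + z + ν - μ) := by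
  have e₁ : s + z + ν + 1 = (s + z + ν) + 1 := by ring
  have e₂ : s + z + ν - μ + 1 = (s + z + ν - μ) + 1 := by ring
  have e₃ : s + z + (ν - 1) + 1 = s + z + ν := by ring
  have e₄ : s + z + (ν - 1) - μ + 1 = s + z + ν - μ := by ring
  rw [gp, gp, e₁, e₂, e₃, e₄, Real.Gamma_add_one hb, Real.Gamma_add_one hbμ]
  field_simp

lemma gp_sub_one_eq (ha : s - z ≠ 0) (haμ : s - z + μ ≠ 0) :
    gp ν s (z - 1) μ = gp (ν - 1) s z μ * (s - z + μ) / (s - z) := by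
  have e₁ : s - (z - 1) + μ = (s - z + μ) + 1 := by ring
  have e₂ : s + (z - 1) + ν + 1 = s + z + (ν - 1) + 1 := by ring
  have e₃ : s - (z - 1) = (s - z) + 1 := by ring
  have e₄ : s + (z - 1) + ν - μ + 1 = s + z + (ν - 1) - μ + 1 := by ring
  rw [gp, gp, e₁, e₂, e₃, e₄, Real.Gamma_add_one haμ, Real.Gamma_add_one ha]
  field_simp

lemma gp_add_one_eq (haμ : s - z + μ ≠ 0) (hb : s + z + ν ≠ 0) :
    gp ν s z (μ + 1) = gp (ν - 1) s z μ * (s - z + μ) * (s + z + ν) := by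
  have e₁ : s - z + (μ + 1) = (s - z + μ) + 1 := by ring
  have e₂ : s + z + ν + 1 = (s + z + ν) + 1 := by ring
  have e₃ : s + z + ν - (μ + 1) + 1 = s + z + (ν - 1) - μ + 1 := by ring
  have e₄ : s + z + (ν - 1) + 1 = s + z + ν := by ring
  rw [gp, gp, e₁, e₂, e₃, e₄, Real.Gamma_add_one haμ, Real.Gamma_add_one hb]
  ring

lemma one_div_gp_sub_one_div_gp_sub_one (ha : NotPole (s - z)) (haμ : NotPole (s - z + μ))
    (hb : NotPole (s + z + ν)) (hbμ : NotPole (s + z + ν - μ)) :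
    1 / gp ν s z μ - 1 / gp ν s (z - 1) μ = μ * (2 * z + ν - μ) / gp ν s z (μ + 1) := by
  have hP : gp (ν - 1) s z μ ≠ 0 :=
    gp_ne_zero ha haμ (by convert hb using 1; ring) (by convert hbμ using 1; ring)
  have ha₀ := ha.ne_zero
  have haμ₀ := haμ.ne_zero
  have hb₀ := hb.ne_zero
  have hbμ₀ := hbμ.ne_zero
  rw [gp_eq_gp_sub_one_left hb₀ hbμ₀, gp_sub_one_eq ha₀ haμ₀, gp_add_one_eq haμ₀ hb₀]
  field_simp
  ring

end Contiguous

theorem stmt5_general (s z ν μ : ℝ)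
    (h1 : NotPole (s - z))
    (h3 : NotPole (s - z + μ))
    (h5 : NotPole (s + z + ν))
    (h7 : NotPole (s + z + ν - μ))
    (hd : xsh (ν - μ + 1) z ≠ xsh (ν - μ + 1) (z - 1)) :
    (1 / gp ν s z μ - 1 / gp ν s (z - 1) μ) /
        (xsh (ν - μ + 1) z - xsh (ν - μ + 1) (z - 1))
      = μ / gp ν s z (μ + 1) := by
  have hstep : xsh (ν - μ + 1) z - xsh (ν - μ + 1) (z - 1) = 2 * z + ν - μ := by
    rw [xsh_sub_xsh_sub_one]
    ring
  have hstep_ne : 2 * z + ν - μ ≠ 0 := hstep ▸ sub_ne_zero.mpr hd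
  rw [hstep, one_div_gp_sub_one_div_gp_sub_one h1 h3 h5 h7]
  field_simp

theorem stmt5 (s z ν μ : ℝ)
    (h1 : NotPole (s - z)) (h2 : NotPole (s - z + 1))
    (h3 : NotPole (s - z + μ)) (h4 : NotPole (s - z + μ + 1))
    (h5 : NotPole (s + z + ν)) (h6 : NotPole (s + z + ν + 1))
    (h7 : NotPole (s + z + ν - μ)) (h8 : NotPole (s + z + ν - μ + 1))
    (hA : gp ν s z μ ≠ 0) (hB : gp ν s (z - 1) μ ≠ 0)
    (hd : xsh (ν - μ + 1) z ≠ xsh (ν - μ + 1) (z - 1)) :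
    (1 / gp ν s z μ - 1 / gp ν s (z - 1) μ) /
        (xsh (ν - μ + 1) z - xsh (ν - μ + 1) (z - 1))
      = μ / gp ν s z (μ + 1) :=
  stmt5_general s z ν μ h1 h3 h5 h7 hd
end

section
/- Taylor theorem for lattice differences: let x_γ be a lattice function, k ∈ ℕ⁺, f a function, ∇_γ^k the k-fold composition of backward lattice differences ∇_{γ}∇_{γ+1}⋯∇_{γ+k−1}, and ∇_γ^{−k} the k-th order lattice sum with base point a. Then, for the quadratic lattice x(s)=s², ∇_γ^{−k}(∇_γ^k f)(z) = f(z) − ∑_{j=0}^{k−1} (∇_{γ+k−j}^j f(a)/ [j]_q!)·[x_{γ+k−1}(z) − x_{γ+k−1}(a)]^{(j)}, where [j]_q! = j!. -/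
/-- Backward lattice difference `∇_γ F(s) = (F(s) − F(s−1))/(x_γ(s) − x_γ(s−1))`. -/
noncomputable def nab (γ : ℝ) (F : ℝ → ℝ) : ℝ → ℝ :=
  fun s => (F s - F (s - 1)) / (xsh γ s - xsh γ (s - 1))

/-- Iterated differences `∇_γ^k F = ∇_γ(∇_{γ+1}(⋯(∇_{γ+k−1} F)))`. -/
noncomputable def nabk (γ : ℝ) : ℕ → (ℝ → ℝ) → (ℝ → ℝ)
  | 0 => fun F => F
  | k + 1 => fun F => nab γ (nabk (γ + 1) k F)

/-- First-order lattice sum, base point `a`, of a grid function `g` (value at `a + m`). -/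
noncomputable def sum1 (a γ : ℝ) (g : ℕ → ℝ) (n : ℕ) : ℝ :=
  ∑ k ∈ Finset.range n, g (k + 1) * (xsh γ (a + 1 + k) - xsh γ (a + k))

/-- `k`-th order lattice sum `∇_γ^{−k} = ∇_{γ+k−1}^{−1} ∘ ∇_γ^{−(k−1)}`. -/
noncomputable def sumk (a γ : ℝ) : ℕ → (ℕ → ℝ) → ℕ → ℝ
  | 0 => fun g n => g n
  | k + 1 => fun g n => sum1 a (γ + k) (sumk a γ k g) n

/-- Integer generalized power `[x_ν(z) − x_ν(w)]^{(j)} = ∏_{i<j} (x_ν(z) − x_ν(w−i))`. -/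
noncomputable def gpInt (ν z w : ℝ) (j : ℕ) : ℝ :=
  ∏ i ∈ Finset.range j, (xsh ν z - xsh ν (w - i))

lemma nabk_succ (k : ℕ) : ∀ (γ : ℝ) (f : ℝ → ℝ),
    nabk γ (k+1) f = nabk γ k (nab (γ + k) f) := by
  induction k with
  | zero => intro γ f; simp [nabk]
  | succ k ih =>
      intro γ f
      have h1 : nabk γ (k+1+1) f = nab γ (nabk (γ+1) (k+1) f) := rfl
      rw [h1, ih (γ+1) f]
      have e : γ + 1 + (k:ℝ) = γ + ((k+1 : ℕ):ℝ) := by push_cast; ring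
      rw [e]
      rfl

lemma tele (a ν : ℝ) (F : ℝ → ℝ) (n : ℕ)
    (h : ∀ m : ℕ, xsh ν (a + ((m+1:ℕ):ℝ)) ≠ xsh ν (a + ((m+1:ℕ):ℝ) - 1)) :
    sum1 a ν (fun m => nab ν F (a + m)) n = F (a + n) - F a := by
  have key : ∀ m : ℕ, nab ν F (a + ((m+1:ℕ):ℝ)) * (xsh ν (a+1+(m:ℝ)) - xsh ν (a+(m:ℝ)))
      = F (a + ((m+1:ℕ):ℝ)) - F (a + (m:ℝ)) := by
    intro m
    have e1 : a + 1 + (m:ℝ) = a + ((m+1:ℕ):ℝ) := by push_cast; ring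
    have e3 : a + (m:ℝ) = a + ((m+1:ℕ):ℝ) - 1 := by push_cast; ring
    rw [e1, e3]
    simp only [nab]
    exact div_mul_cancel₀ _ (sub_ne_zero.mpr (h m))
  calc sum1 a ν (fun m => nab ν F (a + m)) n
      = ∑ m ∈ Finset.range n, (F (a + ((m+1:ℕ):ℝ)) - F (a + (m:ℝ))) := by
        simp only [sum1]
        exact Finset.sum_congr rfl fun m _ => key m
    _ = F (a + (n:ℝ)) - F (a + ((0:ℕ):ℝ)) := Finset.sum_range_sub (fun m => F (a + (m:ℝ))) n
    _ = F (a + n) - F a := by norm_num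

lemma gp_step (ν a s : ℝ) (j : ℕ) :
    gpInt ν s a (j+1) - gpInt ν (s-1) a (j+1)
      = ((j:ℝ)+1) * (xsh ν s - xsh ν (s-1)) * gpInt (ν-1) s a j := by
  have hP : ∀ w : ℝ, gpInt ν w a (j+1)
      = (∏ i ∈ Finset.range (j+1), (w - a + (i:ℝ)))
        * (∏ i ∈ Finset.range (j+1), (w + a + ν - (i:ℝ))) := by
    intro w
    rw [gpInt, ← Finset.prod_mul_distrib]
    refine Finset.prod_congr rfl fun i _ => ?_
    simp only [xsh]; ring
  have hQ : gpInt (ν-1) s a j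
      = (∏ i ∈ Finset.range j, (s - a + (i:ℝ)))
        * (∏ i ∈ Finset.range j, (s + a + ν - 1 - (i:ℝ))) := by
    rw [gpInt, ← Finset.prod_mul_distrib]
    refine Finset.prod_congr rfl fun i _ => ?_
    simp only [xsh]; ring
  have p1 : ∏ i ∈ Finset.range (j+1), (s - a + (i:ℝ))
      = (∏ i ∈ Finset.range j, (s - a + (i:ℝ))) * (s - a + (j:ℝ)) :=
    Finset.prod_range_succ _ j
  have p2 : ∏ i ∈ Finset.range (j+1), (s + a + ν - (i:ℝ))
      = (∏ i ∈ Finset.range j, (s + a + ν - 1 - (i:ℝ))) * (s + a + ν) := by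
    rw [Finset.prod_range_succ']
    congr 1
    · refine Finset.prod_congr rfl fun i _ => ?_; push_cast; ring
    · norm_num
  have p3 : ∏ i ∈ Finset.range (j+1), (s - 1 - a + (i:ℝ))
      = (∏ i ∈ Finset.range j, (s - a + (i:ℝ))) * (s - a - 1) := by
    rw [Finset.prod_range_succ']
    congr 1
    · refine Finset.prod_congr rfl fun i _ => ?_; push_cast; ring
    · norm_num; ring
  have p4 : ∏ i ∈ Finset.range (j+1), (s - 1 + a + ν - (i:ℝ))
      = (∏ i ∈ Finset.range j, (s + a + ν - 1 - (i:ℝ))) * (s + a + ν - 1 - (j:ℝ)) := by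
    rw [Finset.prod_range_succ]
    congr 1
    · refine Finset.prod_congr rfl fun i _ => ?_; ring
    · ring
  have hPs := hP s
  have hPs1 := hP (s-1)
  rw [p1, p2] at hPs
  rw [show (∏ i ∈ Finset.range (j+1), ((s-1) - a + (i:ℝ)))
      = ∏ i ∈ Finset.range (j+1), (s - 1 - a + (i:ℝ)) from Finset.prod_congr rfl fun i _ => by ring,
    show (∏ i ∈ Finset.range (j+1), ((s-1) + a + ν - (i:ℝ)))
      = ∏ i ∈ Finset.range (j+1), (s - 1 + a + ν - (i:ℝ)) from Finset.prod_congr rfl fun i _ => by ring,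
    p3, p4] at hPs1
  rw [hPs, hPs1, hQ]
  simp only [xsh]
  ring

lemma gp_sum (a ν : ℝ) (j n : ℕ) :
    ((j:ℝ)+1) * ∑ m ∈ Finset.range n,
        gpInt (ν-1) (a+1+(m:ℝ)) a j * (xsh ν (a+1+(m:ℝ)) - xsh ν (a+(m:ℝ)))
      = gpInt ν (a+(n:ℝ)) a (j+1) := by
  have key : ∀ m : ℕ, ((j:ℝ)+1) * (gpInt (ν-1) (a+1+(m:ℝ)) a j * (xsh ν (a+1+(m:ℝ)) - xsh ν (a+(m:ℝ))))
      = gpInt ν (a+((m+1:ℕ):ℝ)) a (j+1) - gpInt ν (a+(m:ℝ)) a (j+1) := by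
    intro m
    have e1 : a + ((m+1:ℕ):ℝ) = a + 1 + (m:ℝ) := by push_cast; ring
    have e2 : a + (m:ℝ) = a + 1 + (m:ℝ) - 1 := by ring
    rw [e1, e2, gp_step]
    ring
  rw [Finset.mul_sum]
  rw [Finset.sum_congr rfl fun m _ => key m]
  rw [Finset.sum_range_sub (fun m => gpInt ν (a+(m:ℝ)) a (j+1)) n]
  have h0 : gpInt ν (a+((0:ℕ):ℝ)) a (j+1) = 0 := by
    apply Finset.prod_eq_zero (Finset.mem_range.mpr (Nat.succ_pos j))
    norm_num
  rw [h0, sub_zero]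

lemma main_aux (a γ : ℝ)
    (hx : ∀ j m : ℕ, xsh (γ + (j:ℝ)) (a + (m:ℝ)) ≠ xsh (γ + (j:ℝ)) (a + (m:ℝ) - 1)) :
    ∀ (k : ℕ) (f : ℝ → ℝ) (n : ℕ),
    sumk a γ (k+1) (fun m => nabk γ (k+1) f (a + m)) n
      = f (a + n) - ∑ j ∈ Finset.range (k+1),
          nabk (γ + ((k+1:ℕ):ℝ) - (j:ℝ)) j f a / (Nat.factorial j : ℝ)
            * gpInt (γ + ((k+1:ℕ):ℝ) - 1) (a + n) a j := by
  intro k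
  induction k with
  | zero =>
      intro f n
      have h0 : ∀ m : ℕ, xsh γ (a + ((m+1:ℕ):ℝ)) ≠ xsh γ (a + ((m+1:ℕ):ℝ) - 1) := by
        intro m
        simpa using hx 0 (m+1)
      have hu : sumk a γ 1 (fun m => nabk γ 1 f (a+m)) n
          = sum1 a (γ + ((0:ℕ):ℝ)) (fun m => nabk γ 1 f (a+m)) n := rfl
      have hf : (fun m : ℕ => nabk γ 1 f (a+(m:ℝ))) = (fun m : ℕ => nab γ f (a+(m:ℝ))) := rfl
      rw [hu, hf]
      rw [show γ + ((0:ℕ):ℝ) = γ by norm_num]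
      rw [tele a γ f n h0]
      simp [nabk, gpInt]
  | succ k ih =>
      intro f n
      have hν : ∀ m : ℕ, xsh (γ + ((k+1:ℕ):ℝ)) (a + ((m+1:ℕ):ℝ))
          ≠ xsh (γ + ((k+1:ℕ):ℝ)) (a + ((m+1:ℕ):ℝ) - 1) := fun m => hx (k+1) (m+1)
      have hu : sumk a γ (k+1+1) (fun m => nabk γ (k+1+1) f (a + (m:ℝ))) n
          = sum1 a (γ + ((k+1:ℕ):ℝ))
              (sumk a γ (k+1) (fun m => nabk γ (k+1+1) f (a + (m:ℝ)))) n := rfl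
      have hg : (fun m : ℕ => nabk γ (k+1+1) f (a + (m:ℝ)))
          = (fun m : ℕ => nabk γ (k+1) (nab (γ + ((k+1:ℕ):ℝ)) f) (a + (m:ℝ))) := by
        funext m
        rw [nabk_succ (k+1) γ f]
      have inner : ∀ m : ℕ,
          sumk a γ (k+1) (fun m' => nabk γ (k+1+1) f (a + (m':ℝ))) (m+1)
            = nab (γ + ((k+1:ℕ):ℝ)) f (a + ((m+1:ℕ):ℝ))
              - ∑ j ∈ Finset.range (k+1),
                  nabk (γ + ((k+1:ℕ):ℝ) - (j:ℝ)) j (nab (γ + ((k+1:ℕ):ℝ)) f) a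
                      / (Nat.factorial j : ℝ)
                    * gpInt (γ + ((k+1:ℕ):ℝ) - 1) (a + ((m+1:ℕ):ℝ)) a j := by
        intro m
        rw [hg]
        exact ih (nab (γ + ((k+1:ℕ):ℝ)) f) (m+1)
      rw [hu]
      simp only [sum1]
      rw [Finset.sum_congr rfl fun m _ => by rw [inner m]]
      have split : ∑ m ∈ Finset.range n,
            ((nab (γ + ((k+1:ℕ):ℝ)) f (a + ((m+1:ℕ):ℝ))
              - ∑ j ∈ Finset.range (k+1),
                  nabk (γ + ((k+1:ℕ):ℝ) - (j:ℝ)) j (nab (γ + ((k+1:ℕ):ℝ)) f) a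
                      / (Nat.factorial j : ℝ)
                    * gpInt (γ + ((k+1:ℕ):ℝ) - 1) (a + ((m+1:ℕ):ℝ)) a j)
              * (xsh (γ + ((k+1:ℕ):ℝ)) (a+1+(m:ℝ)) - xsh (γ + ((k+1:ℕ):ℝ)) (a+(m:ℝ))))
          = (∑ m ∈ Finset.range n,
              nab (γ + ((k+1:ℕ):ℝ)) f (a + ((m+1:ℕ):ℝ))
                * (xsh (γ + ((k+1:ℕ):ℝ)) (a+1+(m:ℝ)) - xsh (γ + ((k+1:ℕ):ℝ)) (a+(m:ℝ))))
            - ∑ m ∈ Finset.range n,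
              (∑ j ∈ Finset.range (k+1),
                  nabk (γ + ((k+1:ℕ):ℝ) - (j:ℝ)) j (nab (γ + ((k+1:ℕ):ℝ)) f) a
                      / (Nat.factorial j : ℝ)
                    * gpInt (γ + ((k+1:ℕ):ℝ) - 1) (a + ((m+1:ℕ):ℝ)) a j)
                * (xsh (γ + ((k+1:ℕ):ℝ)) (a+1+(m:ℝ)) - xsh (γ + ((k+1:ℕ):ℝ)) (a+(m:ℝ))) := by
        rw [← Finset.sum_sub_distrib]
        exact Finset.sum_congr rfl fun m _ => by ring
      rw [split]
      have t1 : ∑ m ∈ Finset.range n,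
            nab (γ + ((k+1:ℕ):ℝ)) f (a + ((m+1:ℕ):ℝ))
              * (xsh (γ + ((k+1:ℕ):ℝ)) (a+1+(m:ℝ)) - xsh (γ + ((k+1:ℕ):ℝ)) (a+(m:ℝ)))
          = f (a + (n:ℝ)) - f a := tele a (γ + ((k+1:ℕ):ℝ)) f n hν
      rw [t1]
      have t2 : ∑ m ∈ Finset.range n,
            (∑ j ∈ Finset.range (k+1),
                nabk (γ + ((k+1:ℕ):ℝ) - (j:ℝ)) j (nab (γ + ((k+1:ℕ):ℝ)) f) a
                    / (Nat.factorial j : ℝ)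
                  * gpInt (γ + ((k+1:ℕ):ℝ) - 1) (a + ((m+1:ℕ):ℝ)) a j)
              * (xsh (γ + ((k+1:ℕ):ℝ)) (a+1+(m:ℝ)) - xsh (γ + ((k+1:ℕ):ℝ)) (a+(m:ℝ)))
          = ∑ j ∈ Finset.range (k+1),
              nabk (γ + ((k+1:ℕ):ℝ) - (j:ℝ)) j (nab (γ + ((k+1:ℕ):ℝ)) f) a
                  / (Nat.factorial j : ℝ)
                * (gpInt (γ + ((k+1:ℕ):ℝ)) (a+(n:ℝ)) a (j+1) / ((j:ℝ)+1)) := by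
        rw [Finset.sum_congr rfl fun m _ => Finset.sum_mul ..]
        rw [Finset.sum_comm]
        refine Finset.sum_congr rfl fun j _ => ?_
        calc ∑ x ∈ Finset.range n,
              nabk (γ + ((k+1:ℕ):ℝ) - (j:ℝ)) j (nab (γ + ((k+1:ℕ):ℝ)) f) a
                  / (Nat.factorial j : ℝ)
                * gpInt (γ + ((k+1:ℕ):ℝ) - 1) (a + ((x+1:ℕ):ℝ)) a j
                * (xsh (γ + ((k+1:ℕ):ℝ)) (a+1+(x:ℝ)) - xsh (γ + ((k+1:ℕ):ℝ)) (a+(x:ℝ)))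
            = nabk (γ + ((k+1:ℕ):ℝ) - (j:ℝ)) j (nab (γ + ((k+1:ℕ):ℝ)) f) a
                  / (Nat.factorial j : ℝ)
                * ∑ x ∈ Finset.range n,
                    gpInt (γ + ((k+1:ℕ):ℝ) - 1) (a+1+(x:ℝ)) a j
                      * (xsh (γ + ((k+1:ℕ):ℝ)) (a+1+(x:ℝ)) - xsh (γ + ((k+1:ℕ):ℝ)) (a+(x:ℝ))) := by
              rw [Finset.mul_sum]
              refine Finset.sum_congr rfl fun x _ => ?_
              rw [show a + ((x+1:ℕ):ℝ) = a+1+(x:ℝ) from by push_cast; ring]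
              ring
          _ = nabk (γ + ((k+1:ℕ):ℝ) - (j:ℝ)) j (nab (γ + ((k+1:ℕ):ℝ)) f) a
                  / (Nat.factorial j : ℝ)
                * (gpInt (γ + ((k+1:ℕ):ℝ)) (a+(n:ℝ)) a (j+1) / ((j:ℝ)+1)) := by
              congr 1
              rw [eq_div_iff (by positivity : ((j:ℝ)+1) ≠ 0)]
              linear_combination gp_sum a (γ + ((k+1:ℕ):ℝ)) j n
      have term : ∀ j : ℕ,
          nabk (γ + ((k+1:ℕ):ℝ) - (j:ℝ)) j (nab (γ + ((k+1:ℕ):ℝ)) f) a / (Nat.factorial j : ℝ)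
              * (gpInt (γ + ((k+1:ℕ):ℝ)) (a+(n:ℝ)) a (j+1) / ((j:ℝ)+1))
            = nabk (γ + ((k+1+1:ℕ):ℝ) - ((j+1:ℕ):ℝ)) (j+1) f a / (Nat.factorial (j+1) : ℝ)
              * gpInt (γ + ((k+1+1:ℕ):ℝ) - 1) (a+(n:ℝ)) a (j+1) := by
        intro j
        have e1 : γ + ((k+1+1:ℕ):ℝ) - ((j+1:ℕ):ℝ) = γ + ((k+1:ℕ):ℝ) - (j:ℝ) := by
          push_cast; ring
        have e2 : γ + ((k+1+1:ℕ):ℝ) - 1 = γ + ((k+1:ℕ):ℝ) := by push_cast; ring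
        have e3 : nabk (γ + ((k+1:ℕ):ℝ) - (j:ℝ)) (j+1) f
            = nabk (γ + ((k+1:ℕ):ℝ) - (j:ℝ)) j (nab (γ + ((k+1:ℕ):ℝ)) f) := by
          have h := nabk_succ j (γ + ((k+1:ℕ):ℝ) - (j:ℝ)) f
          rw [show γ + ((k+1:ℕ):ℝ) - (j:ℝ) + (j:ℝ) = γ + ((k+1:ℕ):ℝ) from by ring] at h
          exact h
        rw [e1, e2, e3, Nat.factorial_succ]
        have hf : (Nat.factorial j : ℝ) ≠ 0 := Nat.cast_ne_zero.mpr (Nat.factorial_ne_zero j)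
        have hj : ((j:ℝ)+1) ≠ 0 := by positivity
        push_cast
        rw [div_mul_div_comm, div_mul_eq_mul_div, mul_comm ((j:ℝ)+1) (Nat.factorial j : ℝ)]
      have rhs : ∑ j ∈ Finset.range (k+1+1),
            nabk (γ + ((k+1+1:ℕ):ℝ) - (j:ℝ)) j f a / (Nat.factorial j : ℝ)
              * gpInt (γ + ((k+1+1:ℕ):ℝ) - 1) (a + (n:ℝ)) a j
          = (∑ j ∈ Finset.range (k+1),
              nabk (γ + ((k+1:ℕ):ℝ) - (j:ℝ)) j (nab (γ + ((k+1:ℕ):ℝ)) f) a / (Nat.factorial j : ℝ)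
                * (gpInt (γ + ((k+1:ℕ):ℝ)) (a+(n:ℝ)) a (j+1) / ((j:ℝ)+1))) + f a := by
        rw [Finset.sum_range_succ']
        congr 1
        · exact Finset.sum_congr rfl fun j _ => (term j).symm
        · simp [nabk, gpInt]
      rw [t2, rhs]
      ring

/-- Taylor theorem for integer lattice differences on the quadratic lattice `x(s)=s²`. -/
theorem stmt15 (a γ : ℝ) (f : ℝ → ℝ) (k n : ℕ) (hk : 0 < k) (hn : 0 < n)
    (hx : ∀ j m : ℕ, xsh (γ + j) (a + m) ≠ xsh (γ + j) (a + m - 1)) :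
    sumk a γ k (fun m => nabk γ k f (a + m)) n
      = f (a + n) -
        ∑ j ∈ Finset.range k,
          nabk (γ + k - j) j f a / (Nat.factorial j : ℝ) *
            gpInt (γ + k - 1) (a + n) a j := by
  cases k with
  | zero => omega
  | succ m => exact main_aux a γ hx m f n
end
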